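/- Let d : ℕ → A be admissible. Then there exists n ≥ 1 such that |F(n)| ≤ n if and only if d is eventually periodic (equivalently, by Blanchard's theorem, if and only if the β-shift X_d is sofic). -/

import Mathlib

namespace BetaShift

variable {A : Type*}

/-- The shift map: `(shift x) n = x (n+1)`. -/
def shift (x : ℕ → A) : ℕ → A := fun n => x (n + 1)

/-- Lexicographic order on one-sided sequences: `x = y`, or there is an index `i`
such that `x j = y j` for all `j < i` and `x i < y i`. -/
def SeqLe [LinearOrder A] (x y : ℕ → A) : Prop :=
  x = y ∨ ∃ i, (∀ j, j < i → x j = y j) ∧ x i < y i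

/-- A word `w` occurs in the sequence `x`. -/
def Occurs (w : List A) (x : ℕ → A) : Prop :=
  ∃ i : ℕ, ∀ j : Fin w.length, x (i + j) = w.get j

/-- `Complexity x n` is the number `Φ_n(x)` of distinct words of length `n` occurring in `x`. -/
noncomputable def Complexity (x : ℕ → A) (n : ℕ) : ℕ :=
  Set.ncard {w : List A | w.length = n ∧ Occurs w x}

/-- A sequence is eventually periodic if there are `p ≥ 1` and `N` with
`d (i + p) = d i` for all `i ≥ N`. -/
def EventuallyPeriodic (d : ℕ → A) : Prop :=
  ∃ p, 1 ≤ p ∧ ∃ N, ∀ i, N ≤ i → d (i + p) = d i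

/-- `(d)_k`, the `k`-letter prefix of the sequence `d`, as a word. -/
def prefixWord (d : ℕ → A) (k : ℕ) : List A := List.ofFn (fun i : Fin k => d i)

variable {m : ℕ}

/-- `d` is admissible: every shift of `d` is lexicographically ≤ `d`,
and `d` is not eventually `0`. -/
def Admissible (d : ℕ → Fin m) : Prop :=
  (∀ i, SeqLe (shift^[i] d) d) ∧ ∀ N, ∃ i, N ≤ i ∧ (d i).val ≠ 0

/-- The one-sided β-shift `X_d` determined by the admissible sequence `d`. -/
def XSet (d : ℕ → Fin m) : Set (ℕ → Fin m) :=
  {x | ∀ i, SeqLe (shift^[i] x) d}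

/-- The language of `X_d`: all words occurring in some point of `X_d`. -/
def Lang (d : ℕ → Fin m) : Set (List (Fin m)) :=
  {w | ∃ x ∈ XSet d, Occurs w x}

/-- The follower set of the word `w` in `X_d`. -/
def Fol (d : ℕ → Fin m) (w : List (Fin m)) : Set (List (Fin m)) :=
  {u | w ++ u ∈ Lang d}

/-- The predecessor set of the word `w` in `X_d`. -/
def Pred (d : ℕ → Fin m) (w : List (Fin m)) : Set (List (Fin m)) :=
  {s | s ++ w ∈ Lang d}

/-- The extender set of the word `w` in `X_d`. -/
def Ext (d : ℕ → Fin m) (w : List (Fin m)) : Set (List (Fin m) × List (Fin m)) :=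
  {p | p.1 ++ w ++ p.2 ∈ Lang d}

/-- `|F(n)|`: the number of distinct follower sets of words of length `n` in `X_d`. -/
noncomputable def FolCount (d : ℕ → Fin m) (n : ℕ) : ℕ :=
  Set.ncard {S | ∃ w ∈ Lang d, w.length = n ∧ S = Fol d w}

/-- `|P(n)|`: the number of distinct predecessor sets of words of length `n` in `X_d`. -/
noncomputable def PredCount (d : ℕ → Fin m) (n : ℕ) : ℕ :=
  Set.ncard {S | ∃ w ∈ Lang d, w.length = n ∧ S = Pred d w}

/-- `|E(n)|`: the number of distinct extender sets of words of length `n` in `X_d`. -/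
noncomputable def ExtCount (d : ℕ → Fin m) (n : ℕ) : ℕ :=
  Set.ncard {S | ∃ w ∈ Lang d, w.length = n ∧ S = Ext d w}

/-- The largest `k ≤ n` such that the `k`-letter prefix of `d` is a suffix of `v`
(`k = 0`, the empty prefix, always works). -/
def classIndex (d : ℕ → Fin m) (n : ℕ) (v : List (Fin m)) : ℕ :=
  Nat.findGreatest (fun k => prefixWord d k <:+ v) n

/-- Lexicographic comparison of (equal-length) words: `u = v`, or at the first
index where they differ, `u` takes the smaller value. -/
def WordLe [LinearOrder A] (u v : List A) : Prop :=
  u = v ∨ ∃ i, ∃ (hu : i < u.length) (hv : i < v.length),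
    (∀ j (hju : j < u.length) (hjv : j < v.length), j < i → u.get ⟨j, hju⟩ = v.get ⟨j, hjv⟩) ∧
    u.get ⟨i, hu⟩ < v.get ⟨i, hv⟩

end BetaShift

open BetaShift

/-!
The follower set of a word `w ∈ L(X_d)` depends only on its class `c`, the largest `k ≤ |w|`
such that the prefix `d₀ ⋯ d_{k-1}` is a suffix of `w`: it consists of the words `u ∈ L(X_d)`
that are lexicographically `⪯ σ^c d` on their length. Every class `c ≤ n` occurs among words
of length `n` (take `0^(n-c) d₀ ⋯ d_{c-1}`), and the prefixes of the tails `σ^c d` tell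
different tails apart, so `|F(n)|` is the number of distinct tails `σ^c d` with `c ≤ n`.
There are at most `n` of them exactly when two coincide, i.e. when `d` is eventually periodic.
-/
namespace BetaShift

theorem shift_iterate {α : Type*} (x : ℕ → α) (k : ℕ) : shift^[k] x = fun n => x (n + k) := by
  induction k generalizing x with
  | zero => rfl
  | succ k ih =>
    rw [Function.iterate_succ_apply, ih]
    funext n
    simp only [shift, Nat.add_assoc]

section Periodicity

variable {α : Type*} (x : ℕ → α)

theorem eventuallyPeriodic_iff_exists_shift_iterate_eq :
    EventuallyPeriodic x ↔ ∃ a b, a < b ∧ shift^[a] x = shift^[b] x := by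
  simp only [shift_iterate, funext_iff]
  constructor
  · rintro ⟨p, hp, N, hper⟩
    exact ⟨N, N + p, by omega, fun n => by rw [← Nat.add_assoc, hper _ (Nat.le_add_left _ _)]⟩
  · rintro ⟨a, b, hab, h⟩
    refine ⟨b - a, by omega, a, fun i hi => ?_⟩
    have := h (i - a)
    rw [Nat.sub_add_cancel hi, show i - a + b = i + (b - a) by omega] at this
    exact this.symm

theorem exists_ncard_image_shift_iterate_le_iff :
    (∃ n, 1 ≤ n ∧ ((fun c => shift^[c] x) '' Set.Iic n).ncard ≤ n) ↔ EventuallyPeriodic x := by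
  rw [eventuallyPeriodic_iff_exists_shift_iterate_eq]
  constructor
  · rintro ⟨n, -, hn⟩
    have hnotinj : ¬ Set.InjOn (fun c => shift^[c] x) (Set.Iic n) := fun hinj => by
      rw [hinj.ncard_image, ← Finset.coe_Iic, Set.ncard_coe_finset, Nat.card_Iic] at hn
      omega
    simp only [Set.InjOn, not_forall] at hnotinj
    obtain ⟨a, -, b, -, heq, hne⟩ := hnotinj
    rcases Ne.lt_or_gt hne with h | h
    exacts [⟨a, b, h, heq⟩, ⟨b, a, h, heq.symm⟩]
  · rintro ⟨a, b, hab, h⟩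
    refine ⟨b, by omega, ?_⟩
    calc ((fun c => shift^[c] x) '' Set.Iic b).ncard
        = ((fun c => shift^[c] x) '' Set.Iio b).ncard := by
          rw [← Set.Iio_insert, Set.image_insert_eq, Set.insert_eq_of_mem
            (show shift^[b] x ∈ (fun c => shift^[c] x) '' Set.Iio b from ⟨a, hab, h⟩)]
      _ ≤ (Set.Iio b).ncard := Set.ncard_image_le (Set.finite_Iio b)
      _ = b := by rw [← Finset.coe_Iio, Set.ncard_coe_finset, Nat.card_Iio]

end Periodicity

section Lex

variable {α : Type*} [LinearOrder α] {l c : ℕ} {x x' y y' z : ℕ → α}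

def LexLeUpTo (l : ℕ) (x y : ℕ → α) : Prop :=
  (∀ j < l, x j = y j) ∨ ∃ i < l, (∀ j < i, x j = y j) ∧ x i < y i

theorem LexLeUpTo.congr (hx : ∀ j < l, x j = x' j) (hy : ∀ j < l, y j = y' j)
    (h : LexLeUpTo l x y) : LexLeUpTo l x' y' := by
  rcases h with h | ⟨i, hi, hpre, hlt⟩
  · exact Or.inl fun j hj => (hx j hj).symm.trans ((h j hj).trans (hy j hj))
  · refine Or.inr ⟨i, hi, fun j hj => ?_, ?_⟩
    · rw [← hx j (hj.trans hi), ← hy j (hj.trans hi), hpre j hj]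
    · rwa [← hx i hi, ← hy i hi]

theorem LexLeUpTo.antisymm (h₁ : LexLeUpTo l x y) (h₂ : LexLeUpTo l y x) :
    ∀ j < l, x j = y j := by
  rcases h₁ with h₁ | ⟨i₁, hi₁, hp₁, hl₁⟩
  · exact h₁
  rcases h₂ with h₂ | ⟨i₂, hi₂, hp₂, hl₂⟩
  · exact absurd (h₂ i₁ hi₁).symm hl₁.ne
  rcases lt_trichotomy i₁ i₂ with h | rfl | h
  · exact absurd (hp₂ i₁ h).symm hl₁.ne
  · exact absurd hl₁ hl₂.not_gt
  · exact absurd (hp₁ i₂ h) hl₂.ne'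

theorem LexLeUpTo.trans (h₁ : LexLeUpTo l x y) (h₂ : LexLeUpTo l y z) : LexLeUpTo l x z := by
  rcases h₁ with h₁ | ⟨i₁, hi₁, hp₁, hl₁⟩
  · exact h₂.congr (fun j hj => (h₁ j hj).symm) (fun _ _ => rfl)
  rcases h₂ with h₂ | ⟨i₂, hi₂, hp₂, hl₂⟩
  · refine Or.inr ⟨i₁, hi₁, fun j hj => (hp₁ j hj).trans (h₂ j (hj.trans hi₁)), ?_⟩
    rwa [← h₂ i₁ hi₁]
  rcases lt_trichotomy i₁ i₂ with h | rfl | h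
  · refine Or.inr ⟨i₁, hi₁, fun j hj => (hp₁ j hj).trans (hp₂ j (hj.trans h)), ?_⟩
    rwa [← hp₂ i₁ h]
  · exact Or.inr ⟨i₁, hi₁, fun j hj => (hp₁ j hj).trans (hp₂ j hj), hl₁.trans hl₂⟩
  · refine Or.inr ⟨i₂, hi₂, fun j hj => (hp₁ j (hj.trans h)).trans (hp₂ j hj), ?_⟩
    rwa [hp₁ i₂ h]

theorem lexLeUpTo_add_iff (hpre : ∀ j < c, x j = y j) :
    LexLeUpTo (c + l) x y ↔ LexLeUpTo l (fun n => x (n + c)) (fun n => y (n + c)) := by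
  constructor
  · rintro (h | ⟨i, hi, hp, hl⟩)
    · exact Or.inl fun j hj => h (j + c) (by omega)
    have hci : c ≤ i := by
      by_contra! hic
      exact hl.ne (hpre i hic)
    refine Or.inr ⟨i - c, by omega, fun j hj => hp (j + c) (by omega), ?_⟩
    simpa only [Nat.sub_add_cancel hci] using hl
  · have hsplit : ∀ {i}, (∀ j < i - c, x (j + c) = y (j + c)) → ∀ j < i, x j = y j :=
      fun h j hj => if hjc : j < c then hpre j hjc else by
        simpa [Nat.sub_add_cancel (not_lt.1 hjc)] using h (j - c) (by omega)
    rintro (h | ⟨i, hi, hp, hl⟩)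
    · exact Or.inl (hsplit (i := c + l) fun j hj => h j (by omega))
    · exact Or.inr ⟨i + c, by omega, hsplit fun j hj => hp j (by omega), hl⟩

theorem SeqLe.lexLeUpTo (h : SeqLe x y) (l : ℕ) : LexLeUpTo l x y := by
  rcases h with rfl | ⟨i, hpre, hlt⟩
  · exact Or.inl fun _ _ => rfl
  · by_cases hi : i < l
    · exact Or.inr ⟨i, hi, hpre, hlt⟩
    · exact Or.inl fun j hj => hpre j (by omega)

theorem SeqLe.head_le (h : SeqLe x y) : x 0 ≤ y 0 := by
  rcases h with rfl | ⟨_ | i, hpre, hlt⟩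
  · exact le_rfl
  · exact hlt.le
  · exact (hpre 0 i.succ_pos).le

theorem SeqLe.shift_iterate_of_eqOn (h : SeqLe x y) (hpre : ∀ j < c, x j = y j) :
    SeqLe (shift^[c] x) (shift^[c] y) := by
  rw [shift_iterate, shift_iterate]
  rcases h with rfl | ⟨i, hp, hl⟩
  · exact Or.inl rfl
  have hci : c ≤ i := by
    by_contra! hic
    exact hl.ne (hpre i hic)
  refine Or.inr ⟨i - c, fun j hj => hp (j + c) (by omega), ?_⟩
  simpa only [Nat.sub_add_cancel hci] using hl

end Lex

section Language

variable {m : ℕ} [NeZero m] {d : ℕ → Fin m}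

theorem Admissible.exists_ne_zero (hd : Admissible d) (N : ℕ) : ∃ i, N ≤ i ∧ d i ≠ 0 := by
  obtain ⟨i, hNi, hne⟩ := hd.2 N
  exact ⟨i, hNi, Fin.val_ne_zero_iff.1 hne⟩

theorem Admissible.head_ne_zero (hd : Admissible d) : d 0 ≠ 0 := by
  intro h0
  obtain ⟨i, -, hi⟩ := hd.exists_ne_zero 0
  have hle := (hd.1 i).head_le
  simp only [shift_iterate, Nat.zero_add, h0] at hle
  exact (Fin.pos_iff_ne_zero.2 hi).not_ge hle

theorem Admissible.seqLe_of_eqOn_of_eq_zero (hd : Admissible d) {x : ℕ → Fin m} {l : ℕ}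
    (hpre : ∀ j < l, x j = d j) (hzero : ∀ j, l ≤ j → x j = 0) : SeqLe x d := by
  classical
  have hex := hd.exists_ne_zero l
  obtain ⟨hil, hine⟩ := Nat.find_spec hex
  refine Or.inr ⟨Nat.find hex, fun j hj => ?_, ?_⟩
  · by_cases hjl : j < l
    · exact hpre j hjl
    · rw [hzero j (by omega), eq_comm]
      by_contra hne
      exact Nat.find_min hex hj ⟨by omega, hne⟩
  · rw [hzero _ hil]
    exact Fin.pos_iff_ne_zero.2 hine

def SuffixesLe (d : ℕ → Fin m) (w : List (Fin m)) : Prop :=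
  ∀ k ≤ w.length, LexLeUpTo (w.length - k) (fun j => w.getD (j + k) 0) d

theorem SuffixesLe.of_mem_lang {w : List (Fin m)} (h : w ∈ Lang d) : SuffixesLe d w := by
  obtain ⟨x, hx, i, hocc⟩ := h
  intro k hk
  have hle := (hx (i + k)).lexLeUpTo (w.length - k)
  rw [shift_iterate] at hle
  refine hle.congr (fun j hj => ?_) (fun _ _ => rfl)
  rw [List.getD_eq_getElem _ _ (by omega), ← Nat.add_assoc, Nat.add_comm j i, Nat.add_assoc]
  exact hocc ⟨j + k, by omega⟩

theorem Admissible.mem_lang_of_suffixesLe (hd : Admissible d) {w : List (Fin m)}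
    (hw : SuffixesLe d w) : w ∈ Lang d := by
  refine ⟨fun i => w.getD i 0, fun i => ?_, 0, fun j => ?_⟩
  · rw [shift_iterate]
    by_cases hi : i < w.length
    · rcases hw i hi.le with h | ⟨j, _, hp, hl⟩
      · exact hd.seqLe_of_eqOn_of_eq_zero h fun j hj => List.getD_eq_default _ _ (by omega)
      · exact Or.inr ⟨j, hp, hl⟩
    · exact hd.seqLe_of_eqOn_of_eq_zero (l := 0) (fun j hj => absurd hj j.not_lt_zero)
        fun j _ => List.getD_eq_default _ _ (by omega)
  · simp

theorem Admissible.mem_lang_iff (hd : Admissible d) {w : List (Fin m)} :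
    w ∈ Lang d ↔ SuffixesLe d w :=
  ⟨SuffixesLe.of_mem_lang, hd.mem_lang_of_suffixesLe⟩

end Language

section Prefixes

variable {α : Type*}

theorem getD_prefixWord (x : ℕ → α) (a : α) {i k : ℕ} (h : i < k) :
    (prefixWord x k).getD i a = x i := by
  simp [prefixWord, h]

theorem length_prefixWord (x : ℕ → α) (k : ℕ) : (prefixWord x k).length = k :=
  List.length_ofFn

theorem prefixWord_isSuffix_iff {x : ℕ → α} {w : List α} {l : ℕ} (a : α) :
    prefixWord x l <:+ w ↔ l ≤ w.length ∧ ∀ j < l, w.getD (w.length - l + j) a = x j := by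
  constructor
  · intro h
    have hl : l ≤ w.length := length_prefixWord x l ▸ h.length_le
    refine ⟨hl, fun j hj => ?_⟩
    have := h.getElem (i := j) (by rwa [length_prefixWord])
    rw [List.getD_eq_getElem _ _ (by omega)]
    simpa [prefixWord] using this.symm
  · rintro ⟨hl, hw⟩
    rw [List.suffix_iff_eq_drop, length_prefixWord]
    refine List.ext_getElem (by simp [length_prefixWord]; omega) fun j h₁ h₂ => ?_
    rw [length_prefixWord] at h₁
    rw [List.getElem_drop, ← List.getD_eq_getElem w a, hw j h₁]
    simp [prefixWord]

variable {m : ℕ} {d : ℕ → Fin m} {l : ℕ}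

theorem classIndex_le (n : ℕ) (v : List (Fin m)) : classIndex d n v ≤ n :=
  Nat.findGreatest_le n

theorem prefixWord_classIndex_isSuffix (n : ℕ) (v : List (Fin m)) :
    prefixWord d (classIndex d n v) <:+ v :=
  Nat.findGreatest_spec (P := fun k => prefixWord d k <:+ v) (Nat.zero_le n)
    (by simp [prefixWord])

theorem le_classIndex {n : ℕ} {v : List (Fin m)} (hl : l ≤ n) (h : prefixWord d l <:+ v) :
    l ≤ classIndex d n v :=
  Nat.le_findGreatest hl h

end Prefixes

section Followers

variable {m : ℕ} [NeZero m] {d : ℕ → Fin m} {w u : List (Fin m)} {c l : ℕ}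

theorem Admissible.seqLe_shift_iterate_of_isSuffix (hd : Admissible d)
    (h : prefixWord d l <:+ prefixWord d c) : SeqLe (shift^[c] d) (shift^[l] d) := by
  obtain ⟨hlc, hpre⟩ := (prefixWord_isSuffix_iff 0).1 h
  rw [length_prefixWord] at hlc hpre
  have hagree : ∀ j < l, shift^[c - l] d j = d j := fun j hj => by
    rw [shift_iterate, ← hpre j hj, getD_prefixWord _ _ (by omega), Nat.add_comm]
  have := (hd.1 (c - l)).shift_iterate_of_eqOn hagree
  rwa [← Function.iterate_add_apply, Nat.add_sub_cancel' hlc] at this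

def Followers (d y : ℕ → Fin m) : Set (List (Fin m)) :=
  {u | SuffixesLe d u ∧ LexLeUpTo u.length (fun j => u.getD j 0) y}

theorem SuffixesLe.of_append_right (h : SuffixesLe d (w ++ u)) : SuffixesLe d u := by
  intro k hk
  have h' := h (w.length + k) (by simp; omega)
  rw [List.length_append, show w.length + u.length - (w.length + k) = u.length - k by omega] at h'
  refine h'.congr (fun j hj => ?_) (fun _ _ => rfl)
  rw [List.getD_append_right _ _ _ _ (by omega)]
  congr 1
  omega

theorem SuffixesLe.lexLeUpTo_shift_iterate (h : SuffixesLe d (w ++ u))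
    (hc : prefixWord d c <:+ w) : LexLeUpTo u.length (fun j => u.getD j 0) (shift^[c] d) := by
  obtain ⟨hcn, hpre⟩ := (prefixWord_isSuffix_iff 0).1 hc
  have hagree : ∀ j < c, (w ++ u).getD (j + (w.length - c)) 0 = d j := fun j hj => by
    rw [List.getD_append _ _ _ _ (by omega), ← hpre j hj, Nat.add_comm]
  have h' := h (w.length - c) (by simp; omega)
  rw [List.length_append, show w.length + u.length - (w.length - c) = c + u.length by omega,
    lexLeUpTo_add_iff hagree] at h'
  rw [shift_iterate]
  refine h'.congr (fun j hj => ?_) (fun _ _ => rfl)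
  rw [List.getD_append_right _ _ _ _ (by omega)]
  congr 1
  omega

theorem SuffixesLe.append (hd : Admissible d) (hw : SuffixesLe d w) (hu : SuffixesLe d u)
    (hle : LexLeUpTo u.length (fun j => u.getD j 0) (shift^[classIndex d w.length w] d)) :
    SuffixesLe d (w ++ u) := by
  intro k hk
  rw [List.length_append] at hk ⊢
  by_cases hkn : w.length ≤ k
  · have h := hu (k - w.length) (by omega)
    rw [show u.length - (k - w.length) = w.length + u.length - k by omega] at h
    refine h.congr (fun j hj => ?_) (fun _ _ => rfl)
    rw [List.getD_append_right _ _ _ _ (by omega)]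
    congr 1
    omega
  have happ : ∀ j < w.length - k, (w ++ u).getD (j + k) 0 = w.getD (j + k) 0 :=
    fun j hj => List.getD_append _ _ _ _ (by omega)
  rcases hw k (by omega) with hall | ⟨i, hi, hp, hlt⟩
  · -- The suffix of `w` from `k` is the prefix of `d` of length `l ≤ c`, and `σ^c d ⪯ σ^l d`.
    set l := w.length - k
    have hsuf : prefixWord d l <:+ w := (prefixWord_isSuffix_iff 0).2
      ⟨by omega, fun j hj => by rw [← hall j hj]; congr 1; omega⟩
    have hseq := hd.seqLe_shift_iterate_of_isSuffix <| List.suffix_of_suffix_length_le hsuf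
      (prefixWord_classIndex_isSuffix _ _) <| by
        simpa only [length_prefixWord] using le_classIndex (n := w.length) (by omega) hsuf
    rw [show w.length + u.length - k = l + u.length by omega,
      lexLeUpTo_add_iff fun j hj => (happ j hj).trans (hall j hj)]
    refine (hle.trans (hseq.lexLeUpTo _)).congr (fun j hj => ?_) (fun j _ => ?_)
    · rw [List.getD_append_right _ _ _ _ (by omega)]
      congr 1
      omega
    · rw [shift_iterate]
  · exact Or.inr ⟨i, by omega, fun j hj => (happ j (by omega)).trans (hp j hj),
      by simpa only [happ i hi] using hlt⟩

theorem Admissible.fol_eq (hd : Admissible d) (hw : w ∈ Lang d) :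
    Fol d w = Followers d (shift^[classIndex d w.length w] d) := by
  rw [hd.mem_lang_iff] at hw
  ext u
  simp only [Fol, Followers, Set.mem_ofPred_eq, hd.mem_lang_iff]
  exact ⟨fun h => ⟨h.of_append_right,
      h.lexLeUpTo_shift_iterate (prefixWord_classIndex_isSuffix _ _)⟩,
    fun ⟨hu, hle⟩ => hw.append hd hu hle⟩

end Followers

section Count

variable {m : ℕ} [NeZero m] {d : ℕ → Fin m}

theorem Admissible.replicate_append_prefixWord_mem_lang (hd : Admissible d) (z c : ℕ) :
    List.replicate z 0 ++ prefixWord d c ∈ Lang d := by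
  refine hd.mem_lang_of_suffixesLe fun k hk => ?_
  simp only [List.length_append, List.length_replicate, length_prefixWord] at hk ⊢
  by_cases hkz : k < z
  · refine Or.inr ⟨0, by omega, fun j hj => absurd hj j.not_lt_zero, ?_⟩
    show (List.replicate z 0 ++ prefixWord d c).getD (0 + k) 0 < d 0
    rw [Nat.zero_add, List.getD_append _ _ _ _ (by simpa), List.getD_replicate _ hkz]
    exact Fin.pos_iff_ne_zero.2 hd.head_ne_zero
  · refine ((hd.1 (k - z)).lexLeUpTo _).congr (fun j hj => ?_) (fun _ _ => rfl)
    rw [List.getD_append_right _ _ _ _ (by simp; omega), List.length_replicate,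
      getD_prefixWord _ _ (by omega)]
    simp only [shift_iterate]
    congr 1
    omega

theorem Admissible.classIndex_replicate_append_prefixWord (hd : Admissible d) (z c : ℕ) :
    classIndex d (z + c) (List.replicate z 0 ++ prefixWord d c) = c := by
  refine le_antisymm ?_ (le_classIndex (by omega) (List.suffix_append _ _))
  -- a longer suffix of this word that is a prefix of `d` would start with `0`, but `d 0 ≠ 0`
  by_contra! hlt
  obtain ⟨-, h⟩ := (prefixWord_isSuffix_iff 0).1 (prefixWord_classIndex_isSuffix (d := d) (z + c)
    (List.replicate z 0 ++ prefixWord d c))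
  have hle := classIndex_le (d := d) (z + c) (List.replicate z 0 ++ prefixWord d c)
  have h0 := h 0 (by omega)
  simp only [List.length_append, List.length_replicate, length_prefixWord, Nat.add_zero] at h0
  rw [List.getD_append _ _ _ _ (by simp; omega), List.getD_replicate _ (by omega)] at h0
  exact hd.head_ne_zero h0.symm

theorem Admissible.folSets_eq_image (hd : Admissible d) (n : ℕ) :
    {S | ∃ w ∈ Lang d, w.length = n ∧ S = Fol d w} =
      Followers d '' ((fun c => shift^[c] d) '' Set.Iic n) := by
  rw [Set.image_image]
  ext S
  constructor
  · rintro ⟨w, hw, rfl, rfl⟩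
    exact ⟨_, classIndex_le _ _, (hd.fol_eq hw).symm⟩
  · rintro ⟨c, hc, rfl⟩
    have hcn : c ≤ n := hc
    have hw := hd.replicate_append_prefixWord_mem_lang (n - c) c
    have hlen : (List.replicate (n - c) 0 ++ prefixWord d c).length = n - c + c := by
      simp [length_prefixWord]
    refine ⟨_, hw, by omega, ?_⟩
    rw [hd.fol_eq hw, hlen, hd.classIndex_replicate_append_prefixWord]

theorem Admissible.prefixWord_shift_iterate_mem_followers (hd : Admissible d) (c l : ℕ) :
    prefixWord (shift^[c] d) l ∈ Followers d (shift^[c] d) := by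
  refine ⟨fun k hk => ?_, Or.inl fun j hj => ?_⟩
  · rw [length_prefixWord] at hk ⊢
    refine ((hd.1 (k + c)).lexLeUpTo _).congr (fun j hj => ?_) (fun _ _ => rfl)
    rw [getD_prefixWord _ _ (by omega)]
    simp only [shift_iterate]
    congr 1
    omega
  · rw [length_prefixWord] at hj
    exact getD_prefixWord _ _ hj

theorem Admissible.injOn_followers (hd : Admissible d) :
    Set.InjOn (Followers d) (Set.range fun c => shift^[c] d) := by
  have hle : ∀ {a b}, Followers d (shift^[a] d) = Followers d (shift^[b] d) →
      ∀ l, LexLeUpTo l (shift^[a] d) (shift^[b] d) := fun {a} _ h l => by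
    have := (h ▸ hd.prefixWord_shift_iterate_mem_followers a l).2
    rw [length_prefixWord] at this
    exact this.congr (fun j hj => getD_prefixWord _ _ hj) (fun _ _ => rfl)
  rintro _ ⟨c, rfl⟩ _ ⟨c', rfl⟩ h
  funext j
  exact (hle h (j + 1)).antisymm (hle h.symm (j + 1)) j j.lt_succ_self

theorem Admissible.folCount_eq (hd : Admissible d) (n : ℕ) :
    FolCount d n = ((fun c => shift^[c] d) '' Set.Iic n).ncard := by
  rw [FolCount, hd.folSets_eq_image,
    (hd.injOn_followers.mono (Set.image_subset_range _ _)).ncard_image]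

end Count

end BetaShift

/-- `∃ n ≥ 1, |F(n)| ≤ n` iff `d` is eventually periodic. -/
theorem stmt3 (m : ℕ) (hm : 1 ≤ m) (d : ℕ → Fin m) (hd : Admissible d) :
    (∃ n, 1 ≤ n ∧ FolCount d n ≤ n) ↔ EventuallyPeriodic d := by
  have : NeZero m := ⟨by omega⟩
  simp only [hd.folCount_eq]
  exact exists_ncard_image_shift_iterate_le_iff d
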